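/- Let n ≥ 2, m > 0, R > 0, λ0 > 0, and q > (n−3)/2. There exists a constant B2 > 0, depending only on n, q, R and λ0, such that for all t > 0 and all x ∈ ℝⁿ with |x| ≤ φ(t) + R, η_q(x,t,t) ≤ B2 ⟨φ(t)⟩^{−(n−1)/2} ⟨φ(t) − |x|⟩^{(n−3)/2 − q}. -/

import Mathlib

open MeasureTheory Real Filter Set

noncomputable section

/-- φ(t) = (2/(m+2)) t^((m+2)/2) -/
def phi (m t : ℝ) : ℝ := (2 / (m + 2)) * t ^ ((m + 2) / 2)

/-- ⟨s⟩ = 3 + |s| -/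
def br (s : ℝ) : ℝ := 3 + |s|

/-- γ(m,n,p) -/
def gam (m : ℝ) (n : ℕ) (p : ℝ) : ℝ :=
  -((m + 2) * n / 2 - 1) * p ^ 2 - ((m + 2) * (1 - n / 2) - 3) * p + (m + 2)

/-- Laplacian as sum of second coordinate derivatives -/
def lap {n : ℕ} (f : EuclideanSpace ℝ (Fin n) → ℝ) (x : EuclideanSpace ℝ (Fin n)) : ℝ :=
  ∑ i : Fin n, iteratedDeriv 2 (fun s : ℝ => f (x + s • EuclideanSpace.single i 1)) 0

/-- data: smooth, nonnegative, supported in the ball of radius R -/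
def IsData (n : ℕ) (R : ℝ) (u0 u1 : EuclideanSpace ℝ (Fin n) → ℝ) : Prop :=
  ContDiff ℝ (⊤ : ℕ∞) u0 ∧ ContDiff ℝ (⊤ : ℕ∞) u1 ∧ (∀ x, 0 ≤ u0 x) ∧ (∀ x, 0 ≤ u1 x) ∧
  (∀ x, R < ‖x‖ → u0 x = 0) ∧ (∀ x, R < ‖x‖ → u1 x = 0)

/-- u is a C² solution of u_tt − t^m Δu = |u|^p on [0,T) with data (ε u0, ε u1),
supported in |x| ≤ R + φ(t). -/
structure IsSolution (n : ℕ) (m R p ε T : ℝ) (u0 u1 : EuclideanSpace ℝ (Fin n) → ℝ)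
    (u : EuclideanSpace ℝ (Fin n) → ℝ → ℝ) : Prop where
  smooth : ContDiffOn ℝ 2 (fun q : EuclideanSpace ℝ (Fin n) × ℝ => u q.1 q.2)
      (Set.univ ×ˢ Set.Ico 0 T)
  pde : ∀ x, ∀ t ∈ Set.Ioo (0 : ℝ) T,
      iteratedDeriv 2 (u x) t - t ^ m * lap (fun y => u y t) x = |u x t| ^ p
  init0 : ∀ x, u x 0 = ε * u0 x
  init1 : ∀ x, deriv (u x) 0 = ε * u1 x
  supp : ∀ t ∈ Set.Ico (0 : ℝ) T, ∀ x, R + phi m t < ‖x‖ → u x t = 0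

/-- V solves y'' = λ² t^m y on [0,∞) with initial data (a,b). -/
def SolODE (m lam : ℝ) (V : ℝ → ℝ) (a b : ℝ) : Prop :=
  ContDiff ℝ 2 V ∧ V 0 = a ∧ deriv V 0 = b ∧
  ∀ t : ℝ, 0 ≤ t → deriv (deriv V) t = lam ^ 2 * t ^ m * V t

/-- Ψ(x) = ∫_{S^{n-1}} e^{x·ω} dσ(ω) -/
def Psi (n : ℕ) (x : EuclideanSpace ℝ (Fin n)) : ℝ :=
  ∫ ω in Metric.sphere (0 : EuclideanSpace ℝ (Fin n)) 1,
    Real.exp (inner ℝ x ω : ℝ) ∂(MeasureTheory.Measure.hausdorffMeasure ((n : ℝ) - 1))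

def Phi1 (V1 V2 : ℝ → ℝ → ℝ) (lam t s : ℝ) : ℝ :=
  V1 lam t * deriv (V2 lam) s - V2 lam t * deriv (V1 lam) s

def Phi2 (V1 V2 : ℝ → ℝ → ℝ) (lam t s : ℝ) : ℝ :=
  V1 lam s * V2 lam t - V2 lam s * V1 lam t

def xiq (n : ℕ) (m R lam0 q : ℝ) (V1 V2 : ℝ → ℝ → ℝ)
    (x : EuclideanSpace ℝ (Fin n)) (t s : ℝ) : ℝ :=
  ∫ lam in (0 : ℝ)..lam0,
    Real.exp (-(lam * (phi m t + R))) * Phi1 V1 V2 lam t s * Psi n (lam • x) * lam ^ q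

/-- η_q on the diagonal s = t -/
def etaqd (n : ℕ) (m R lam0 q : ℝ) (x : EuclideanSpace ℝ (Fin n)) (t : ℝ) : ℝ :=
  ∫ lam in (0 : ℝ)..lam0,
    Real.exp (-(lam * (phi m t + R))) * Psi n (lam • x) * lam ^ q

def etaq (n : ℕ) (m R lam0 q : ℝ) (V1 V2 : ℝ → ℝ → ℝ)
    (x : EuclideanSpace ℝ (Fin n)) (t s : ℝ) : ℝ :=
  if s = t then etaqd n m R lam0 q x t
  else
    ∫ lam in (0 : ℝ)..lam0,
      Real.exp (-(lam * (phi m t + R))) * (Phi2 V1 V2 lam t s / (t - s)) * Psi n (lam • x) * lam ^ q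


set_option maxHeartbeats 1000000

open scoped ENNReal NNReal RealInnerProductSpace



lemma sqrt_abs_sub (A B : ℝ) (hA : 3/4 ≤ A) (hB : 3/4 ≤ B) :
    |Real.sqrt A - Real.sqrt B| ≤ |A - B| := by
  have hA0 : (0:ℝ) ≤ A := by linarith
  have hB0 : (0:ℝ) ≤ B := by linarith
  have ha := Real.sq_sqrt hA0
  have hb := Real.sq_sqrt hB0
  have ha1 : 1/2 ≤ Real.sqrt A := by nlinarith [Real.sqrt_nonneg A]
  have hb1 : 1/2 ≤ Real.sqrt B := by nlinarith [Real.sqrt_nonneg B]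
  rcases le_total (Real.sqrt A) (Real.sqrt B) with h | h
  · rw [abs_of_nonpos (by linarith), abs_of_nonpos (by nlinarith)]
    nlinarith
  · rw [abs_of_nonneg (by linarith), abs_of_nonneg (by nlinarith)]
    nlinarith

lemma lipschitz_pi_to_euclidean (d : ℕ) :
    LipschitzWith (Real.toNNReal (Real.sqrt d)) ((WithLp.equiv 2 (Fin d → ℝ)).symm) := by
  apply LipschitzWith.of_dist_le_mul
  intro x y
  have h1 : dist ((WithLp.equiv 2 (Fin d → ℝ)).symm x) ((WithLp.equiv 2 (Fin d → ℝ)).symm y)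
      = Real.sqrt (∑ i, dist (x i) (y i) ^ 2) := by
    rw [EuclideanSpace.dist_eq]
    simp
  rw [h1]
  have h2 : (∑ i, dist (x i) (y i) ^ 2) ≤ (d : ℝ) * dist x y ^ 2 := by
    calc (∑ i, dist (x i) (y i) ^ 2) ≤ ∑ _i : Fin d, dist x y ^ 2 := by
          apply Finset.sum_le_sum
          intro i _
          have h := dist_le_pi_dist x y i
          nlinarith [dist_nonneg (x := x i) (y := y i), dist_nonneg (x := x) (y := y)]
      _ = (d : ℝ) * dist x y ^ 2 := by
          rw [Finset.sum_const, Finset.card_univ, Fintype.card_fin, nsmul_eq_mul]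
  calc Real.sqrt (∑ i, dist (x i) (y i) ^ 2) ≤ Real.sqrt ((d:ℝ) * dist x y ^ 2) :=
        Real.sqrt_le_sqrt h2
    _ = Real.sqrt d * dist x y := by
        rw [Real.sqrt_mul (Nat.cast_nonneg d), Real.sqrt_sq dist_nonneg]
    _ = (Real.toNNReal (Real.sqrt d) : ℝ) * dist x y := by
        rw [Real.coe_toNNReal _ (Real.sqrt_nonneg _)]

lemma hausdorff_closedBall_le (d : ℕ) (ρ : ℝ) (hρ : 0 ≤ ρ) :
    (MeasureTheory.Measure.hausdorffMeasure (d:ℝ) : Measure (EuclideanSpace ℝ (Fin d)))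
      (Metric.closedBall 0 ρ) ≤ ENNReal.ofReal ((Real.sqrt d * 2 * ρ)^d) := by
  set j := (WithLp.equiv 2 (Fin d → ℝ)).symm
  have hsub : Metric.closedBall (0 : EuclideanSpace ℝ (Fin d)) ρ ⊆
      j '' (Metric.closedBall 0 ρ) := by
    intro y hy
    refine ⟨WithLp.equiv 2 _ y, ?_, by simp [j]⟩
    rw [Metric.mem_closedBall] at hy ⊢
    rw [dist_pi_le_iff hρ]
    intro i
    refine le_trans ?_ hy
    have : dist ((WithLp.equiv 2 (Fin d → ℝ)) y i) ((0 : Fin d → ℝ) i) ≤ dist y 0 := by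
      have h1 : dist y (0 : EuclideanSpace ℝ (Fin d)) =
          Real.sqrt (∑ k, dist (y k) ((0:EuclideanSpace ℝ (Fin d)) k) ^ 2) := by
        rw [EuclideanSpace.dist_eq]
      rw [h1]
      have h2 : dist ((WithLp.equiv 2 (Fin d → ℝ)) y i) ((0 : Fin d → ℝ) i) ^ 2
          ≤ ∑ k, dist (y k) ((0:EuclideanSpace ℝ (Fin d)) k) ^ 2 := by
        apply Finset.single_le_sum (f := fun k => dist (y k) ((0:EuclideanSpace ℝ (Fin d)) k) ^ 2)
          (fun k _ => by positivity) (Finset.mem_univ i)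
      calc dist ((WithLp.equiv 2 (Fin d → ℝ)) y i) ((0 : Fin d → ℝ) i)
          = Real.sqrt (dist ((WithLp.equiv 2 (Fin d → ℝ)) y i) ((0 : Fin d → ℝ) i) ^ 2) := by
            rw [Real.sqrt_sq dist_nonneg]
        _ ≤ _ := Real.sqrt_le_sqrt h2
    exact this
  calc (MeasureTheory.Measure.hausdorffMeasure (d:ℝ) : Measure (EuclideanSpace ℝ (Fin d)))
        (Metric.closedBall 0 ρ)
      ≤ (MeasureTheory.Measure.hausdorffMeasure (d:ℝ) : Measure (EuclideanSpace ℝ (Fin d)))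
        (j '' (Metric.closedBall 0 ρ)) :=
        measure_mono hsub
    _ ≤ (Real.toNNReal (Real.sqrt d) : ℝ≥0∞) ^ (d:ℝ) *
        (MeasureTheory.Measure.hausdorffMeasure (d:ℝ) : Measure (Fin d → ℝ))
          (Metric.closedBall 0 ρ) :=
        (lipschitz_pi_to_euclidean d).hausdorffMeasure_image_le (Nat.cast_nonneg d) _
    _ ≤ ENNReal.ofReal ((Real.sqrt d * 2 * ρ)^d) := by
        have hpi : (MeasureTheory.Measure.hausdorffMeasure (d:ℝ) : Measure (Fin d → ℝ))
            (Metric.closedBall 0 ρ) = ENNReal.ofReal ((2 * ρ)^d) := by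
          have : (MeasureTheory.Measure.hausdorffMeasure ((Fintype.card (Fin d)):ℝ)
              : Measure (Fin d → ℝ)) = volume := hausdorffMeasure_pi_real
          rw [Fintype.card_fin] at this
          rw [this, Real.volume_pi_closedBall _ hρ, Fintype.card_fin]
        rw [hpi, ENNReal.rpow_natCast]
        have hco : (((Real.sqrt d).toNNReal : ℝ≥0) : ℝ≥0∞) = ENNReal.ofReal (Real.sqrt d) := rfl
        rw [hco, ← ENNReal.ofReal_pow (Real.sqrt_nonneg _), ← ENNReal.ofReal_mul (by positivity)]
        apply ENNReal.ofReal_le_ofReal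
        rw [← mul_pow, ← mul_assoc]


lemma cap_small (n : ℕ) (hn : 2 ≤ n) :
    ∃ C : ℝ, 0 < C ∧ ∀ p : EuclideanSpace ℝ (Fin n), ‖p‖ = 1 →
      ∀ ρ : ℝ, 0 < ρ → ρ ≤ 1/2 →
      (MeasureTheory.Measure.hausdorffMeasure ((n:ℝ)-1) :
        Measure (EuclideanSpace ℝ (Fin n))) (Metric.sphere 0 1 ∩ Metric.closedBall p ρ)
        ≤ ENNReal.ofReal (C * ρ^(n-1)) := by
  obtain ⟨d, rfl⟩ : ∃ d, n = d + 1 := ⟨n-1, by omega⟩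
  have hd1 : 1 ≤ d := by omega
  have hidx : ((d+1:ℕ):ℝ) - 1 = (d:ℝ) := by push_cast; ring
  refine ⟨2^d * (Real.sqrt d * 2)^d, by positivity, ?_⟩
  intro p hp ρ hρ0 hρ
  haveI : Fact (Module.finrank ℝ (EuclideanSpace ℝ (Fin (d+1))) = d + 1) :=
    ⟨finrank_euclideanSpace_fin⟩
  have hp0 : p ≠ 0 := by intro h; rw [h, norm_zero] at hp; norm_num at hp
  set b := OrthonormalBasis.fromOrthogonalSpanSingleton (𝕜 := ℝ) d hp0 with hb
  set F : EuclideanSpace ℝ (Fin d) → EuclideanSpace ℝ (Fin (d+1)) :=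
    fun z => ((b.repr.symm z : (ℝ ∙ p)ᗮ) : EuclideanSpace ℝ (Fin (d+1)))
      + Real.sqrt (1 - ‖z‖^2) • p with hF
  -- Lipschitz
  have hLip : LipschitzOnWith 2 F (Metric.closedBall 0 ρ) := by
    apply LipschitzOnWith.of_dist_le_mul
    intro z hz w hw
    rw [Metric.mem_closedBall, dist_zero_right] at hz hw
    have hz2 : ‖z‖ ≤ 1/2 := le_trans hz hρ
    have hw2 : ‖w‖ ≤ 1/2 := le_trans hw hρ
    have hzn := norm_nonneg z
    have hwn := norm_nonneg w
    rw [dist_eq_norm, dist_eq_norm]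
    have hFd : F z - F w = ((b.repr.symm z - b.repr.symm w : (ℝ ∙ p)ᗮ) :
        EuclideanSpace ℝ (Fin (d+1)))
        + (Real.sqrt (1 - ‖z‖^2) - Real.sqrt (1 - ‖w‖^2)) • p := by
      simp only [hF, map_sub, Submodule.coe_sub, sub_smul]
      abel
    rw [hFd]
    have h1 : ‖((b.repr.symm z - b.repr.symm w : (ℝ ∙ p)ᗮ) :
        EuclideanSpace ℝ (Fin (d+1)))‖ = ‖z - w‖ := by
      rw [Submodule.norm_coe, ← map_sub, b.repr.symm.norm_map]
    have h2 : |Real.sqrt (1 - ‖z‖^2) - Real.sqrt (1 - ‖w‖^2)| ≤ ‖z - w‖ := by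
      have := sqrt_abs_sub (1 - ‖z‖^2) (1 - ‖w‖^2) (by nlinarith) (by nlinarith)
      refine le_trans this ?_
      have habs : |‖w‖ - ‖z‖| ≤ ‖w - z‖ := abs_norm_sub_norm_le w z
      have : |1 - ‖z‖^2 - (1 - ‖w‖^2)| = |‖w‖ - ‖z‖| * (‖w‖ + ‖z‖) := by
        rw [← abs_of_nonneg (by positivity : (0:ℝ) ≤ ‖w‖ + ‖z‖), ← abs_mul]
        congr 1; ring
      rw [this, norm_sub_rev z w]
      calc |‖w‖ - ‖z‖| * (‖w‖ + ‖z‖) ≤ ‖w - z‖ * 1 := by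
            apply mul_le_mul habs (by linarith) (by positivity) (norm_nonneg _)
        _ = ‖w - z‖ := mul_one _
    calc ‖_ + _‖ ≤ ‖((b.repr.symm z - b.repr.symm w : (ℝ ∙ p)ᗮ) :
          EuclideanSpace ℝ (Fin (d+1)))‖
          + ‖(Real.sqrt (1 - ‖z‖^2) - Real.sqrt (1 - ‖w‖^2)) • p‖ := norm_add_le _ _
      _ ≤ ‖z - w‖ + ‖z - w‖ := by
          rw [h1, norm_smul, hp, mul_one, Real.norm_eq_abs]
          exact add_le_add le_rfl h2
      _ = (2:ℝ≥0) * ‖z - w‖ := by push_cast; ring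
  -- covering
  have hcov : Metric.sphere (0:EuclideanSpace ℝ (Fin (d+1))) 1 ∩ Metric.closedBall p ρ ⊆
      F '' (Metric.closedBall 0 ρ) := by
    rintro ω ⟨hωS, hωB⟩
    rw [mem_sphere_zero_iff_norm] at hωS
    rw [Metric.mem_closedBall, dist_eq_norm] at hωB
    set c : ℝ := ⟪p, ω⟫
    have hcle : c ≤ 1 := by
      have := real_inner_le_norm p ω
      rw [hp, hωS] at this; linarith
    have hnsq : ‖ω - p‖^2 = 2 - 2*c := by
      rw [norm_sub_sq_real, hωS, hp, real_inner_comm]; ring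
    have hc78 : 7/8 ≤ c := by nlinarith [norm_nonneg (ω - p), sq_nonneg ‖ω - p‖]
    have hw : ω - c • p ∈ (ℝ ∙ p)ᗮ := by
      rw [Submodule.mem_orthogonal_singleton_iff_inner_right]
      rw [inner_sub_right, real_inner_smul_right, real_inner_self_eq_norm_sq, hp]
      ring
    set z : EuclideanSpace ℝ (Fin d) := b.repr ⟨ω - c • p, hw⟩ with hz
    have hznorm : ‖z‖ = ‖ω - c • p‖ := by
      rw [hz, b.repr.norm_map]
      rfl
    have hwsq : ‖ω - c • p‖^2 = 1 - c^2 := by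
      have h5 : ⟪ω, c • p⟫ = c * c := by
        rw [real_inner_smul_right, ← real_inner_comm ω p]
      have h6 : ‖c • p‖^2 = c^2 := by
        rw [norm_smul, hp, mul_one, Real.norm_eq_abs, sq_abs]
      rw [norm_sub_sq_real, hωS, h5, h6]; ring
    have hzρ : ‖z‖ ≤ ρ := by
      have hsq : ‖ω - p‖^2 ≤ ρ^2 := by nlinarith [norm_nonneg (ω - p)]
      have h1 : ‖z‖^2 ≤ ρ^2 := by
        rw [hznorm, hwsq]
        nlinarith [sq_nonneg (1 - c)]
      nlinarith [norm_nonneg z]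
    refine ⟨z, by rwa [Metric.mem_closedBall, dist_zero_right], ?_⟩
    have h3 : Real.sqrt (1 - ‖z‖^2) = c := by
      rw [hznorm, hwsq]
      have : 1 - (1 - c^2) = c^2 := by ring
      rw [this, Real.sqrt_sq (by linarith)]
    rw [hF]
    simp only
    rw [b.repr.symm_apply_apply, h3]
    simp only [Submodule.coe_mk]
    abel
  -- measure chain
  calc (MeasureTheory.Measure.hausdorffMeasure (((d+1:ℕ):ℝ)-1) :
        Measure (EuclideanSpace ℝ (Fin (d+1))))
        (Metric.sphere 0 1 ∩ Metric.closedBall p ρ)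
      ≤ (MeasureTheory.Measure.hausdorffMeasure (((d+1:ℕ):ℝ)-1) :
        Measure (EuclideanSpace ℝ (Fin (d+1)))) (F '' (Metric.closedBall 0 ρ)) :=
        measure_mono hcov
    _ ≤ ((2:ℝ≥0) : ℝ≥0∞) ^ (((d+1:ℕ):ℝ)-1) *
        (MeasureTheory.Measure.hausdorffMeasure (((d+1:ℕ):ℝ)-1) :
          Measure (EuclideanSpace ℝ (Fin d))) (Metric.closedBall 0 ρ) := by
        rw [hidx]
        exact hLip.hausdorffMeasure_image_le (Nat.cast_nonneg d)
    _ ≤ ENNReal.ofReal ((2^d * (Real.sqrt d * 2)^d) * ρ^(d+1-1)) := by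
        rw [hidx, ENNReal.rpow_natCast]
        refine le_trans (mul_le_mul_right (hausdorff_closedBall_le d ρ hρ0.le) _) ?_
        have hco : (((2:ℝ≥0)) : ℝ≥0∞) = ENNReal.ofReal 2 := by
          simp [ENNReal.ofReal_ofNat]
        rw [hco, ← ENNReal.ofReal_pow (by norm_num), ← ENNReal.ofReal_mul (by positivity)]
        apply ENNReal.ofReal_le_ofReal
        have : d + 1 - 1 = d := by omega
        rw [this, mul_pow (Real.sqrt d * 2) ρ, ← mul_assoc]

lemma capBound (n : ℕ) (hn : 2 ≤ n) :
    ∃ C : ℝ, 0 < C ∧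
      (∀ p : EuclideanSpace ℝ (Fin n), ‖p‖ = 1 → ∀ ρ : ℝ, 0 < ρ →
        (MeasureTheory.Measure.hausdorffMeasure ((n:ℝ)-1) :
          Measure (EuclideanSpace ℝ (Fin n))) (Metric.sphere 0 1 ∩ Metric.closedBall p ρ)
          ≤ ENNReal.ofReal (C * ρ^(n-1))) ∧
      (MeasureTheory.Measure.hausdorffMeasure ((n:ℝ)-1) :
          Measure (EuclideanSpace ℝ (Fin n))) (Metric.sphere 0 1) ≤ ENNReal.ofReal C := by
  obtain ⟨C1, hC1, hcap⟩ := cap_small n hn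
  -- total measure of the sphere is finite, via a finite cover by small caps
  obtain ⟨Cs, hCs, hsph⟩ : ∃ Cs : ℝ, 0 < Cs ∧
      (MeasureTheory.Measure.hausdorffMeasure ((n:ℝ)-1) :
        Measure (EuclideanSpace ℝ (Fin n))) (Metric.sphere 0 1) ≤ ENNReal.ofReal Cs := by
    have hS : IsCompact (Metric.sphere (0:EuclideanSpace ℝ (Fin n)) 1) := isCompact_sphere _ _
    have hcov : Metric.sphere (0:EuclideanSpace ℝ (Fin n)) 1 ⊆
        ⋃ p ∈ Metric.sphere (0:EuclideanSpace ℝ (Fin n)) 1, Metric.ball p (1/2) := by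
      intro ω hω
      exact mem_biUnion hω (Metric.mem_ball_self (by norm_num))
    obtain ⟨b', hb's, hb'fin, hb'cov⟩ := hS.elim_finite_subcover_image
      (fun p _ => Metric.isOpen_ball) hcov
    set t := hb'fin.toFinset with ht
    have htcov : Metric.sphere (0:EuclideanSpace ℝ (Fin n)) 1 ⊆
        ⋃ p ∈ t, (Metric.sphere (0:EuclideanSpace ℝ (Fin n)) 1 ∩ Metric.closedBall p (1/2)) := by
      intro ω hω
      obtain ⟨p, hpb, hpball⟩ := mem_iUnion₂.1 (hb'cov hω)
      refine mem_iUnion₂.2 ⟨p, ?_, hω, Metric.ball_subset_closedBall hpball⟩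
      simpa [ht] using hpb
    refine ⟨(t.card + 1) * (C1 * (1/2)^(n-1)) + 1, by positivity, ?_⟩
    calc (MeasureTheory.Measure.hausdorffMeasure ((n:ℝ)-1) :
          Measure (EuclideanSpace ℝ (Fin n))) (Metric.sphere 0 1)
        ≤ ∑ p ∈ t, (MeasureTheory.Measure.hausdorffMeasure ((n:ℝ)-1) :
          Measure (EuclideanSpace ℝ (Fin n)))
            (Metric.sphere 0 1 ∩ Metric.closedBall p (1/2)) :=
          le_trans (measure_mono htcov) (measure_biUnion_finset_le _ _)
      _ ≤ ∑ _p ∈ t, ENNReal.ofReal (C1 * (1/2)^(n-1)) := by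
          apply Finset.sum_le_sum
          intro p hpt
          have hpS : ‖p‖ = 1 := by
            have := hb's (by simpa [ht] using hpt)
            rwa [mem_sphere_zero_iff_norm] at this
          exact hcap p hpS (1/2) (by norm_num) le_rfl
      _ = (t.card : ℝ≥0∞) * ENNReal.ofReal (C1 * (1/2)^(n-1)) := by
          rw [Finset.sum_const, nsmul_eq_mul]
      _ ≤ ENNReal.ofReal ((t.card + 1) * (C1 * (1/2)^(n-1)) + 1) := by
          rw [← ENNReal.ofReal_natCast t.card, ← ENNReal.ofReal_mul (by positivity)]
          apply ENNReal.ofReal_le_ofReal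
          have h0 : (0:ℝ) ≤ C1 * (1/2)^(n-1) := by positivity
          nlinarith [h0]
  refine ⟨max C1 (Cs * 2^(n-1)) + Cs, by positivity, ?_, ?_⟩
  · intro p hp ρ hρ0
    rcases le_or_gt ρ (1/2) with hρ | hρ
    · refine le_trans (hcap p hp ρ hρ0 hρ) (ENNReal.ofReal_le_ofReal ?_)
      have : C1 ≤ max C1 (Cs * 2^(n-1)) + Cs := by
        have := le_max_left C1 (Cs * 2^(n-1)); linarith
      have hρpow : (0:ℝ) ≤ ρ^(n-1) := by positivity
      nlinarith
    · refine le_trans (le_trans (measure_mono inter_subset_left) hsph)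
        (ENNReal.ofReal_le_ofReal ?_)
      -- Cs ≤ (max C1 (Cs 2^{n-1}) + Cs) ρ^{n-1}, using ρ ≥ 1/2
      have h1 : Cs * 2^(n-1) ≤ max C1 (Cs * 2^(n-1)) := le_max_right _ _
      have h2 : (1:ℝ)/2 ≤ ρ := hρ.le
      have h3 : ((1:ℝ)/2)^(n-1) ≤ ρ^(n-1) := pow_le_pow_left₀ (by norm_num) h2 _
      have h4 : Cs = (Cs * 2^(n-1)) * (1/2)^(n-1) := by
        rw [mul_assoc, ← mul_pow]
        norm_num
      calc Cs = (Cs * 2^(n-1)) * (1/2)^(n-1) := h4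
        _ ≤ (max C1 (Cs * 2^(n-1)) + Cs) * ρ^(n-1) := by
            apply mul_le_mul (by linarith) h3 (by positivity) (by positivity)
  · refine le_trans hsph (ENNReal.ofReal_le_ofReal ?_)
    have := le_max_right C1 (Cs * 2^(n-1))
    have h5 : (0:ℝ) < 2^(n-1) := by positivity
    nlinarith [le_max_left C1 (Cs * 2^(n-1)), hCs]


lemma term_bound (D : ℕ) : ∃ M : ℝ, 0 < M ∧ ∀ k : ℕ,
    ((k:ℝ)+1)^D * Real.exp (-(k:ℝ)^2/2) ≤ M * Real.exp (-(k:ℝ)/4) := by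
  refine ⟨(5:ℝ)^D + (D.factorial:ℝ), by positivity, ?_⟩
  intro k
  have hk0 : (0:ℝ) ≤ (k:ℝ) := Nat.cast_nonneg k
  have hkk : (k:ℝ) ≤ (k:ℝ)^2 := by
    rcases Nat.eq_zero_or_pos k with h | h
    · simp [h]
    · have : (1:ℝ) ≤ (k:ℝ) := by exact_mod_cast h
      nlinarith
  have key : ((k:ℝ)+1)^D ≤ ((5:ℝ)^D + (D.factorial:ℝ)) * Real.exp ((k:ℝ)^2/4) := by
    rcases le_or_gt k 4 with h | h
    · have h4 : (k:ℝ) ≤ 4 := by exact_mod_cast h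
      have h5 : ((k:ℝ)+1) ≤ 5 := by linarith
      have hpow := pow_le_pow_left₀ (by linarith : (0:ℝ) ≤ (k:ℝ)+1) h5 D
      have hexp : (1:ℝ) ≤ Real.exp ((k:ℝ)^2/4) := Real.one_le_exp (by positivity)
      have hfac : (0:ℝ) ≤ (D.factorial:ℝ) := by positivity
      have h5D : (0:ℝ) < (5:ℝ)^D := by positivity
      nlinarith
    · have hk5 : (5:ℝ) ≤ (k:ℝ) := by exact_mod_cast h
      have h1 : ((k:ℝ)+1) ≤ (k:ℝ)^2/4 := by nlinarith
      have h2 : ((k:ℝ)+1)^D ≤ ((k:ℝ)^2/4)^D :=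
        pow_le_pow_left₀ (by linarith) h1 D
      have h3 : ((k:ℝ)^2/4)^D ≤ (D.factorial:ℝ) * Real.exp ((k:ℝ)^2/4) := by
        have hx : (0:ℝ) ≤ (k:ℝ)^2/4 := by positivity
        have hsum := Real.sum_le_exp_of_nonneg hx (D+1)
        have hsingle : ((k:ℝ)^2/4)^D / (D.factorial:ℝ) ≤
            ∑ i ∈ Finset.range (D+1), ((k:ℝ)^2/4)^i / (i.factorial:ℝ) :=
          Finset.single_le_sum (f := fun i => ((k:ℝ)^2/4)^i / (i.factorial:ℝ))
            (fun i _ => by positivity) (Finset.self_mem_range_succ D)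
        have hfac : (0:ℝ) < (D.factorial:ℝ) := by positivity
        rw [div_le_iff₀ hfac] at hsingle
        nlinarith [Real.exp_pos ((k:ℝ)^2/4)]
      have h5D : (0:ℝ) < (5:ℝ)^D := by positivity
      nlinarith [Real.exp_pos ((k:ℝ)^2/4)]
  have e2 : Real.exp (-(k:ℝ)^2/4) ≤ Real.exp (-(k:ℝ)/4) := Real.exp_le_exp.2 (by linarith)
  calc ((k:ℝ)+1)^D * Real.exp (-(k:ℝ)^2/2)
      ≤ (((5:ℝ)^D + (D.factorial:ℝ)) * Real.exp ((k:ℝ)^2/4)) * Real.exp (-(k:ℝ)^2/2) :=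
        mul_le_mul_of_nonneg_right key (Real.exp_pos _).le
    _ = ((5:ℝ)^D + (D.factorial:ℝ)) * Real.exp (-(k:ℝ)^2/4) := by
        rw [mul_assoc, ← Real.exp_add]; ring_nf
    _ ≤ ((5:ℝ)^D + (D.factorial:ℝ)) * Real.exp (-(k:ℝ)/4) := by
        apply mul_le_mul_of_nonneg_left e2 (by positivity)

lemma psi_bounds (n : ℕ) (hn : 2 ≤ n) : ∃ C : ℝ, 0 < C ∧
    (∀ y : EuclideanSpace ℝ (Fin n), 0 ≤ Psi n y) ∧
    (∀ y : EuclideanSpace ℝ (Fin n), Psi n y ≤ C * Real.exp ‖y‖) ∧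
    (∀ y : EuclideanSpace ℝ (Fin n), y ≠ 0 →
      Psi n y ≤ C * Real.exp ‖y‖ * ‖y‖ ^ (-(((n:ℝ)-1)/2))) := by
  obtain ⟨Cc, hCc, hcap, hsph⟩ := capBound n hn
  obtain ⟨M, hM, hterm⟩ := term_bound (n-1)
  set μ : Measure (EuclideanSpace ℝ (Fin n)) :=
    MeasureTheory.Measure.hausdorffMeasure ((n:ℝ)-1) with hμ
  set S : Set (EuclideanSpace ℝ (Fin n)) := Metric.sphere 0 1 with hS
  -- Psi as a lower integral
  have hmeas : ∀ y : EuclideanSpace ℝ (Fin n),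
      AEStronglyMeasurable (fun ω => Real.exp (inner ℝ y ω : ℝ)) (μ.restrict S) := by
    intro y
    exact (Real.continuous_exp.comp (continuous_const.inner continuous_id)).aestronglyMeasurable
  have hPsiL : ∀ y : EuclideanSpace ℝ (Fin n),
      Psi n y = (∫⁻ ω in S, ENNReal.ofReal (Real.exp (inner ℝ y ω : ℝ)) ∂μ).toReal := by
    intro y
    exact integral_eq_lintegral_of_nonneg_ae (ae_of_all _ fun ω => (Real.exp_pos _).le) (hmeas y)
  have hnonneg : ∀ y : EuclideanSpace ℝ (Fin n), 0 ≤ Psi n y := by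
    intro y; rw [hPsiL]; exact ENNReal.toReal_nonneg
  -- trivial bound
  have htriv : ∀ y : EuclideanSpace ℝ (Fin n), Psi n y ≤ Cc * Real.exp ‖y‖ := by
    intro y
    rw [hPsiL]
    apply ENNReal.toReal_le_of_le_ofReal (by positivity)
    calc ∫⁻ ω in S, ENNReal.ofReal (Real.exp (inner ℝ y ω : ℝ)) ∂μ
        ≤ ∫⁻ _ω in S, ENNReal.ofReal (Real.exp ‖y‖) ∂μ := by
          apply setLIntegral_mono measurable_const
          intro ω hω
          apply ENNReal.ofReal_le_ofReal
          apply Real.exp_le_exp.2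
          have h1 := real_inner_le_norm y ω
          rw [mem_sphere_zero_iff_norm.1 hω] at h1
          simpa using h1
      _ = ENNReal.ofReal (Real.exp ‖y‖) * μ S := setLIntegral_const _ _
      _ ≤ ENNReal.ofReal (Real.exp ‖y‖) * ENNReal.ofReal Cc := mul_le_mul_right hsph _
      _ = ENNReal.ofReal (Cc * Real.exp ‖y‖) := by
          rw [← ENNReal.ofReal_mul (Real.exp_pos _).le, mul_comm]
  refine ⟨Cc + Cc * M * (1 - Real.exp (-(1:ℝ)/4))⁻¹, ?_, hnonneg, ?_, ?_⟩
  · have hlt : Real.exp (-(1:ℝ)/4) < 1 := Real.exp_lt_one_iff.2 (by norm_num)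
    have : (0:ℝ) < (1 - Real.exp (-(1:ℝ)/4))⁻¹ := by
      apply inv_pos.2; linarith
    positivity
  · intro y
    have hlt : Real.exp (-(1:ℝ)/4) < 1 := Real.exp_lt_one_iff.2 (by norm_num)
    have h2 : (0:ℝ) < (1 - Real.exp (-(1:ℝ)/4))⁻¹ := by apply inv_pos.2; linarith
    have h4 := htriv y
    have h5 : 0 ≤ Cc * M * (1 - Real.exp (-(1:ℝ)/4))⁻¹ := by positivity
    nlinarith [Real.exp_pos ‖y‖]
  · intro y hy0
    set k : ℝ := ((n:ℝ)-1)/2 with hk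
    have hk0 : 0 ≤ k := by
      rw [hk]
      have : (2:ℝ) ≤ (n:ℝ) := by exact_mod_cast hn
      linarith
    set r : ℝ := ‖y‖ with hr
    have hr0 : 0 < r := norm_pos_iff.2 hy0
    rcases le_or_gt r 1 with hr1 | hr1
    · -- small y : use trivial bound
      have h1 : (1:ℝ) ≤ r ^ (-k) :=
        Real.one_le_rpow_of_pos_of_le_one_of_nonpos hr0 hr1 (by linarith)
      have h2 := htriv y
      have hC2 : Cc ≤ Cc + Cc * M * (1 - Real.exp (-(1:ℝ)/4))⁻¹ := by
        have hlt : Real.exp (-(1:ℝ)/4) < 1 := Real.exp_lt_one_iff.2 (by norm_num)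
        have h3 : (0:ℝ) < (1 - Real.exp (-(1:ℝ)/4))⁻¹ := by apply inv_pos.2; linarith
        have h6 : 0 ≤ Cc * M * (1 - Real.exp (-(1:ℝ)/4))⁻¹ := by positivity
        linarith
      calc Psi n y ≤ Cc * Real.exp r := h2
        _ ≤ (Cc + Cc * M * (1 - Real.exp (-(1:ℝ)/4))⁻¹) * Real.exp r * 1 := by
            rw [mul_one]
            exact mul_le_mul_of_nonneg_right hC2 (Real.exp_pos _).le
        _ ≤ (Cc + Cc * M * (1 - Real.exp (-(1:ℝ)/4))⁻¹) * Real.exp r * r ^ (-k) := by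
            apply mul_le_mul_of_nonneg_left h1
            have hlt : Real.exp (-(1:ℝ)/4) < 1 := Real.exp_lt_one_iff.2 (by norm_num)
            have h3 : (0:ℝ) < (1 - Real.exp (-(1:ℝ)/4))⁻¹ := by apply inv_pos.2; linarith
            positivity
    · -- large y : dyadic caps
      set p : EuclideanSpace ℝ (Fin n) := ‖y‖⁻¹ • y with hpdef
      have hp : ‖p‖ = 1 := norm_smul_inv_norm hy0
      have hyp : y = r • p := by
        rw [hpdef, smul_smul, hr, mul_inv_cancel₀ (by positivity : ‖y‖ ≠ 0), one_smul]
      set δ : ℝ := Real.sqrt r⁻¹ with hδ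
      have hδpos : 0 < δ := Real.sqrt_pos.2 (by positivity)
      have hδ2 : δ^2 = r⁻¹ := Real.sq_sqrt (by positivity)
      set A : ℕ → Set (EuclideanSpace ℝ (Fin n)) := fun j =>
        S ∩ (Metric.closedBall p (((j:ℝ)+1)*δ) \ Metric.ball p ((j:ℝ)*δ)) with hA
      have hcov : S ⊆ ⋃ j : ℕ, A j := by
        intro ω hω
        set s := ‖ω - p‖ with hs
        have hs0 : 0 ≤ s := norm_nonneg _
        refine mem_iUnion.2 ⟨⌊s/δ⌋₊, hω, ?_, ?_⟩
        · rw [Metric.mem_closedBall, dist_eq_norm]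
          have h1 : s/δ < (⌊s/δ⌋₊:ℝ) + 1 := Nat.lt_floor_add_one _
          rw [div_lt_iff₀ hδpos] at h1
          linarith
        · rw [Metric.mem_ball, dist_eq_norm]
          push_neg
          have h1 : (⌊s/δ⌋₊:ℝ) ≤ s/δ := Nat.floor_le (by positivity)
          rw [le_div_iff₀ hδpos] at h1
          linarith
      have hinner : ∀ j : ℕ, ∀ ω ∈ A j, (inner ℝ y ω : ℝ) ≤ r - (j:ℝ)^2/2 := by
        intro j ω hωA
        obtain ⟨hωS, hωB⟩ := hωA
        have hω1 : ‖ω‖ = 1 := mem_sphere_zero_iff_norm.1 hωS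
        have hlow : (j:ℝ)*δ ≤ ‖ω - p‖ := by
          have := hωB.2
          rw [Metric.mem_ball, dist_eq_norm] at this
          push_neg at this
          exact this
        have hpω : ‖ω - p‖^2 = 2 - 2*(inner ℝ p ω : ℝ) := by
          rw [norm_sub_sq_real, hω1, hp, ← real_inner_comm ω p]; ring
        have hiy : (inner ℝ y ω : ℝ) = r * (inner ℝ p ω : ℝ) := by
          rw [hyp, real_inner_smul_left]
        have hsq : ((j:ℝ)*δ)^2 ≤ ‖ω - p‖^2 := by
          have hjδ : (0:ℝ) ≤ (j:ℝ)*δ := by positivity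
          nlinarith
        have hδsq : r * δ^2 = 1 := by
          rw [hδ2, mul_inv_cancel₀ (by positivity)]
        rw [hiy]
        have : (inner ℝ p ω : ℝ) = 1 - ‖ω - p‖^2/2 := by linarith
        rw [this]
        have h2 : r * ((j:ℝ)*δ)^2 ≤ r * ‖ω - p‖^2 := by
          apply mul_le_mul_of_nonneg_left hsq (by positivity)
        have h3 : r * ((j:ℝ)*δ)^2 = (j:ℝ)^2 := by
          rw [mul_pow]
          calc r * ((j:ℝ)^2 * δ^2) = (j:ℝ)^2 * (r * δ^2) := by ring
            _ = (j:ℝ)^2 := by rw [hδsq, mul_one]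
        nlinarith
      -- lintegral estimate
      have hAmeas : ∀ j : ℕ, MeasurableSet (A j) := by
        intro j
        exact ((Metric.isClosed_sphere).measurableSet).inter
          ((Metric.isClosed_closedBall.measurableSet).diff Metric.isOpen_ball.measurableSet)
      have hchain : (∫⁻ ω in S, ENNReal.ofReal (Real.exp (inner ℝ y ω : ℝ)) ∂μ) ≤
          ENNReal.ofReal ((Real.exp r * Cc * δ^(n-1) * M) * (1 - Real.exp (-(1:ℝ)/4))⁻¹) := by
        calc (∫⁻ ω in S, ENNReal.ofReal (Real.exp (inner ℝ y ω : ℝ)) ∂μ)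
            ≤ ∫⁻ ω in ⋃ j : ℕ, A j, ENNReal.ofReal (Real.exp (inner ℝ y ω : ℝ)) ∂μ :=
              lintegral_mono_set hcov
          _ ≤ ∑' j : ℕ, ∫⁻ ω in A j, ENNReal.ofReal (Real.exp (inner ℝ y ω : ℝ)) ∂μ :=
              lintegral_iUnion_le _ _
          _ ≤ ∑' j : ℕ, ENNReal.ofReal ((Real.exp r * Cc * δ^(n-1) * M) * Real.exp (-(1:ℝ)/4)^j) := by
              apply ENNReal.tsum_le_tsum
              intro j
              calc ∫⁻ ω in A j, ENNReal.ofReal (Real.exp (inner ℝ y ω : ℝ)) ∂μ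
                  ≤ ∫⁻ _ω in A j, ENNReal.ofReal (Real.exp (r - (j:ℝ)^2/2)) ∂μ := by
                    apply setLIntegral_mono measurable_const
                    intro ω hω
                    exact ENNReal.ofReal_le_ofReal (Real.exp_le_exp.2 (hinner j ω hω))
                _ = ENNReal.ofReal (Real.exp (r - (j:ℝ)^2/2)) * μ (A j) := setLIntegral_const _ _
                _ ≤ ENNReal.ofReal (Real.exp (r - (j:ℝ)^2/2)) *
                    ENNReal.ofReal (Cc * (((j:ℝ)+1)*δ)^(n-1)) := by
                    apply mul_le_mul_right
                    refine le_trans (measure_mono ?_) (hcap p hp (((j:ℝ)+1)*δ) (by positivity))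
                    exact inter_subset_inter_right _ (diff_subset.trans (by rfl))
                _ ≤ ENNReal.ofReal ((Real.exp r * Cc * δ^(n-1) * M) * Real.exp (-(1:ℝ)/4)^j) := by
                    rw [← ENNReal.ofReal_mul (Real.exp_pos _).le]
                    apply ENNReal.ofReal_le_ofReal
                    have hterm' := hterm j
                    have hfact : Real.exp (r - (j:ℝ)^2/2) = Real.exp r * Real.exp (-(j:ℝ)^2/2) := by
                      rw [← Real.exp_add]; ring_nf
                    have hpow : (((j:ℝ)+1)*δ)^(n-1) = ((j:ℝ)+1)^(n-1) * δ^(n-1) := mul_pow _ _ _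
                    have hgeom : Real.exp (-(j:ℝ)/4) = Real.exp (-(1:ℝ)/4)^j := by
                      rw [← Real.exp_nat_mul]; ring_nf
                    rw [hfact, hpow, ← hgeom]
                    have hδp : (0:ℝ) ≤ δ^(n-1) := by positivity
                    have e1 : Real.exp r * Real.exp (-(j:ℝ)^2/2) * (Cc * (((j:ℝ)+1)^(n-1) * δ^(n-1)))
                        = (Real.exp r * Cc * δ^(n-1)) * (((j:ℝ)+1)^(n-1) * Real.exp (-(j:ℝ)^2/2)) := by
                      ring
                    rw [e1]
                    have e2 : (Real.exp r * Cc * δ^(n-1) * M) * Real.exp (-(j:ℝ)/4)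
                        = (Real.exp r * Cc * δ^(n-1)) * (M * Real.exp (-(j:ℝ)/4)) := by ring
                    rw [e2]
                    apply mul_le_mul_of_nonneg_left hterm' (by positivity)
          _ = ENNReal.ofReal (Real.exp r * Cc * δ^(n-1) * M) *
              ∑' j : ℕ, (ENNReal.ofReal (Real.exp (-(1:ℝ)/4)))^j := by
              rw [← ENNReal.tsum_mul_left]
              congr 1
              funext j
              rw [← ENNReal.ofReal_pow (Real.exp_pos _).le,
                ← ENNReal.ofReal_mul (by positivity)]
          _ ≤ ENNReal.ofReal ((Real.exp r * Cc * δ^(n-1) * M) * (1 - Real.exp (-(1:ℝ)/4))⁻¹) := by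
              rw [ENNReal.tsum_geometric]
              have hlt : Real.exp (-(1:ℝ)/4) < 1 := Real.exp_lt_one_iff.2 (by norm_num)
              have h1 : (1:ℝ≥0∞) - ENNReal.ofReal (Real.exp (-(1:ℝ)/4)) =
                  ENNReal.ofReal (1 - Real.exp (-(1:ℝ)/4)) := by
                rw [ENNReal.ofReal_sub _ (Real.exp_pos _).le, ENNReal.ofReal_one]
              rw [h1, ← ENNReal.ofReal_inv_of_pos (by linarith),
                ← ENNReal.ofReal_mul (by positivity)]
      -- convert to real
      have hδpow : δ^(n-1) = r ^ (-k) := by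
        have hcast : ((n-1:ℕ):ℝ) = (n:ℝ) - 1 := by
          have : (1:ℕ) ≤ n := by omega
          push_cast [this]
          ring
        rw [hδ, Real.sqrt_eq_rpow, ← Real.rpow_natCast (r⁻¹ ^ ((1:ℝ)/2)) (n-1),
          ← Real.rpow_mul (by positivity), hcast,
          Real.inv_rpow hr0.le, ← Real.rpow_neg hr0.le]
        congr 1
        rw [hk]
        ring
      rw [hPsiL]
      have := ENNReal.toReal_le_of_le_ofReal (b := (Real.exp r * Cc * δ^(n-1) * M) *
        (1 - Real.exp (-(1:ℝ)/4))⁻¹) ?hb hchain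
      case hb =>
        have hlt : Real.exp (-(1:ℝ)/4) < 1 := Real.exp_lt_one_iff.2 (by norm_num)
        have h3 : (0:ℝ) < (1 - Real.exp (-(1:ℝ)/4))⁻¹ := by apply inv_pos.2; linarith
        positivity
      refine le_trans this ?_
      rw [hδpow]
      have hrpk : (0:ℝ) ≤ r ^ (-k) := Real.rpow_nonneg hr0.le _
      have hlt : Real.exp (-(1:ℝ)/4) < 1 := Real.exp_lt_one_iff.2 (by norm_num)
      have h3 : (0:ℝ) < (1 - Real.exp (-(1:ℝ)/4))⁻¹ := by apply inv_pos.2; linarith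
      have hCcM : 0 ≤ Cc * M * (1 - Real.exp (-(1:ℝ)/4))⁻¹ := by positivity
      calc Real.exp r * Cc * r ^ (-k) * M * (1 - Real.exp (-(1:ℝ)/4))⁻¹
          = (Cc * M * (1 - Real.exp (-(1:ℝ)/4))⁻¹) * Real.exp r * r ^ (-k) := by ring
        _ ≤ (Cc + Cc * M * (1 - Real.exp (-(1:ℝ)/4))⁻¹) * Real.exp r * r ^ (-k) := by
            apply mul_le_mul_of_nonneg_right _ hrpk
            apply mul_le_mul_of_nonneg_right _ (Real.exp_pos _).le
            linarith


lemma intgE (lam0 : ℝ) (hlam0 : 0 < lam0) (p : ℝ) (hp : -1 < p) (a : ℝ) (ha : 0 ≤ a) :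
    IntervalIntegrable (fun l => l ^ p * Real.exp (-(l*a))) volume 0 lam0 := by
  have hi := intervalIntegral.intervalIntegrable_rpow' (a := (0:ℝ)) (b := lam0) hp
  apply hi.mono_fun
  · have hc : ContinuousOn (fun l : ℝ => l ^ p * Real.exp (-(l*a))) (Set.uIoc 0 lam0) := by
      apply ContinuousOn.mul
      · apply ContinuousOn.rpow_const continuousOn_id
        intro x hx
        rw [uIoc_of_le hlam0.le] at hx
        exact Or.inl (ne_of_gt hx.1)
      · exact (Real.continuous_exp.comp ((continuous_id.mul continuous_const).neg)).continuousOn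
    exact hc.aestronglyMeasurable measurableSet_uIoc
  · apply (ae_restrict_iff' measurableSet_uIoc).2
    apply ae_of_all
    intro l hl
    rw [uIoc_of_le hlam0.le] at hl
    show ‖l ^ p * Real.exp (-(l*a))‖ ≤ ‖l ^ p‖
    rw [Real.norm_eq_abs, Real.norm_eq_abs, abs_mul]
    have hla : 0 ≤ l * a := mul_nonneg hl.1.le ha
    have h : Real.exp (-(l*a)) ≤ 1 := Real.exp_le_one_iff.2 (by linarith)
    have habs : |Real.exp (-(l*a))| = Real.exp (-(l*a)) := abs_of_pos (Real.exp_pos _)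
    rw [habs]
    exact mul_le_of_le_one_right (abs_nonneg _) h

lemma Ebound (lam0 : ℝ) (hlam0 : 0 < lam0) (p : ℝ) (hp : -1 < p) :
    ∃ CE : ℝ, 0 < CE ∧ ∀ a : ℝ, 0 ≤ a →
      (∫ l in (0:ℝ)..lam0, l ^ p * Real.exp (-(l*a))) ≤ CE * (3+a) ^ (-(p+1)) := by
  have hp1 : 0 < p + 1 := by linarith
  have hΓ : 0 < Real.Gamma (p+1) := Real.Gamma_pos_of_pos hp1
  have hl1 : 0 < lam0 ^ (p+1) := Real.rpow_pos_of_pos hlam0 _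
  have h4 : (0:ℝ) < 4 ^ (p+1) := Real.rpow_pos_of_pos (by norm_num) _
  refine ⟨lam0 ^ (p+1) / (p+1) * 4^(p+1) + Real.Gamma (p+1) * 4^(p+1), ?_, ?_⟩
  · have := div_pos hl1 hp1
    positivity
  intro a ha
  have h3a : (0:ℝ) < 3 + a := by linarith
  have h3an : (0:ℝ) ≤ (3+a) ^ (-(p+1)) := Real.rpow_nonneg h3a.le _
  rcases le_or_gt a 1 with ha1 | ha1
  · -- small a
    have step1 : (∫ l in (0:ℝ)..lam0, l ^ p * Real.exp (-(l*a))) ≤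
        ∫ l in (0:ℝ)..lam0, l ^ p := by
      apply intervalIntegral.integral_mono_ae_restrict hlam0.le
        (intgE lam0 hlam0 p hp a ha) (intervalIntegral.intervalIntegrable_rpow' hp)
      apply (ae_restrict_iff' measurableSet_Icc).2
      apply ae_of_all
      intro l hl
      have hl0 : 0 ≤ l := hl.1
      have he : Real.exp (-(l*a)) ≤ 1 := Real.exp_le_one_iff.2 (by nlinarith)
      have hlp : 0 ≤ l ^ p := Real.rpow_nonneg hl0 _
      show l ^ p * Real.exp (-(l*a)) ≤ l ^ p
      nlinarith
    have step2 : (∫ l in (0:ℝ)..lam0, l ^ p) = lam0 ^ (p+1) / (p+1) := by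
      rw [integral_rpow (Or.inl hp), Real.zero_rpow (by linarith), sub_zero]
    have step3 : (4:ℝ)^(-(p+1)) ≤ (3+a)^(-(p+1)) :=
      Real.rpow_le_rpow_of_nonpos h3a (by linarith) (by linarith)
    have h44 : (4:ℝ)^(p+1) * (4:ℝ)^(-(p+1)) = 1 := by
      rw [← Real.rpow_add (by norm_num : (0:ℝ) < 4)]
      have : p + 1 + -(p+1) = 0 := by ring
      rw [this, Real.rpow_zero]
    calc (∫ l in (0:ℝ)..lam0, l ^ p * Real.exp (-(l*a))) ≤ lam0 ^ (p+1) / (p+1) := by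
          rw [← step2]; exact step1
      _ = (lam0 ^ (p+1) / (p+1) * 4^(p+1)) * (4:ℝ)^(-(p+1)) := by
          rw [mul_assoc, h44, mul_one]
      _ ≤ (lam0 ^ (p+1) / (p+1) * 4^(p+1)) * (3+a)^(-(p+1)) := by
          apply mul_le_mul_of_nonneg_left step3
          positivity
      _ ≤ (lam0 ^ (p+1) / (p+1) * 4^(p+1) + Real.Gamma (p+1) * 4^(p+1)) * (3+a)^(-(p+1)) := by
          apply mul_le_mul_of_nonneg_right _ h3an
          nlinarith
  · -- large a
    have ha0 : 0 < a := by linarith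
    have hIoi : IntegrableOn (fun l : ℝ => l ^ p * Real.exp (-(l*a))) (Ioi 0) volume := by
      have := integrableOn_rpow_mul_exp_neg_mul_rpow hp (zero_lt_one' ℝ) ha0
      apply this.congr_fun ?_ measurableSet_Ioi
      intro x hx
      show x ^ p * Real.exp (-a * x ^ (1:ℝ)) = x ^ p * Real.exp (-(x * a))
      rw [Real.rpow_one]
      ring_nf
    have step1 : (∫ l in (0:ℝ)..lam0, l ^ p * Real.exp (-(l*a))) ≤
        ∫ l in Ioi (0:ℝ), l ^ p * Real.exp (-(l*a)) := by
      rw [intervalIntegral.integral_of_le hlam0.le]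
      apply setIntegral_mono_set hIoi
      · apply (ae_restrict_iff' measurableSet_Ioi).2
        apply ae_of_all
        intro l hl
        have hl0 : (0:ℝ) < l := hl
        positivity
      · exact HasSubset.Subset.eventuallyLE Ioc_subset_Ioi_self
    have step2 : (∫ l in Ioi (0:ℝ), l ^ p * Real.exp (-(l*a))) =
        (1/a) ^ (p+1) * Real.Gamma (p+1) := by
      have := integral_rpow_mul_exp_neg_mul_Ioi hp1 ha0
      simp only [add_sub_cancel_right] at this
      rw [← this]
      apply setIntegral_congr_fun measurableSet_Ioi
      intro x hx
      show x ^ p * Real.exp (-(x * a)) = x ^ p * Real.exp (-(a * x))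
      rw [mul_comm x a]
    have key : (1/a) ^ (p+1) * Real.Gamma (p+1) ≤
        (Real.Gamma (p+1) * 4^(p+1)) * (3+a)^(-(p+1)) := by
      have hap : (0:ℝ) < a ^ (p+1) := Real.rpow_pos_of_pos ha0 _
      have h3ap : (0:ℝ) < (3+a) ^ (p+1) := Real.rpow_pos_of_pos h3a _
      have hmono : (3+a) ^ (p+1) ≤ (4*a) ^ (p+1) :=
        Real.rpow_le_rpow h3a.le (by linarith) (by linarith)
      rw [Real.mul_rpow (by norm_num) ha0.le] at hmono
      have hinv : (1/a) ^ (p+1) = (a ^ (p+1))⁻¹ := by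
        rw [one_div, Real.inv_rpow ha0.le]
      have hneg : (3+a) ^ (-(p+1)) = ((3+a) ^ (p+1))⁻¹ := by
        rw [Real.rpow_neg h3a.le]
      rw [hinv, hneg, ← sub_nonneg]
      have expand : Real.Gamma (p+1) * 4^(p+1) * ((3+a) ^ (p+1))⁻¹ -
          (a ^ (p+1))⁻¹ * Real.Gamma (p+1) =
          Real.Gamma (p+1) * ((4^(p+1) * a^(p+1) - (3+a)^(p+1)) /
            ((3+a)^(p+1) * a^(p+1))) := by
        field_simp
      rw [expand]
      apply mul_nonneg hΓ.le
      apply div_nonneg (by linarith) (by positivity)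
    calc (∫ l in (0:ℝ)..lam0, l ^ p * Real.exp (-(l*a)))
        ≤ (1/a) ^ (p+1) * Real.Gamma (p+1) := by rw [← step2]; exact step1
      _ ≤ (Real.Gamma (p+1) * 4^(p+1)) * (3+a)^(-(p+1)) := key
      _ ≤ (lam0 ^ (p+1) / (p+1) * 4^(p+1) + Real.Gamma (p+1) * 4^(p+1)) * (3+a)^(-(p+1)) := by
          apply mul_le_mul_of_nonneg_right _ h3an
          have := div_pos hl1 hp1
          nlinarith


lemma rpow_transfer {X Y c z : ℝ} (hc : 0 < c) (hY : 0 < Y) (hX : 0 < X)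
    (hXle : Y ≤ c * X) (hz : z ≤ 0) : X ^ z ≤ c ^ (-z) * Y ^ z := by
  have h1 : c^z * X^z ≤ Y^z := by
    rw [← Real.mul_rpow hc.le hX.le]
    exact Real.rpow_le_rpow_of_nonpos hY hXle hz
  have hcz : (0:ℝ) < c^z := Real.rpow_pos_of_pos hc _
  have h2 : X^z ≤ Y^z / c^z := by
    rw [le_div_iff₀ hcz, mul_comm]
    exact h1
  rw [Real.rpow_neg hc.le, inv_mul_eq_div]
  exact h2


/-- upper bound for `η_q(x,t,t)` for `|x| ≤ φ(t)+R`, `t > 0`. -/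
theorem etaq_diag_upper_bound (n : ℕ) (hn : 2 ≤ n) (m R lam0 q : ℝ) (hm : 0 < m)
    (hR : 0 < R) (hlam0 : 0 < lam0) (hq : ((n : ℝ) - 3) / 2 < q) :
    ∃ B2 > (0 : ℝ), ∀ t : ℝ, 0 < t → ∀ x : EuclideanSpace ℝ (Fin n), ‖x‖ ≤ phi m t + R →
      etaqd n m R lam0 q x t ≤
        B2 * br (phi m t) ^ (-(((n : ℝ) - 1) / 2))
          * br (phi m t - ‖x‖) ^ (((n : ℝ) - 3) / 2 - q) := by
  obtain ⟨Cψ, hCψ, hψ0, hψtriv, hψdec⟩ := psi_bounds n hn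
  have hn2 : (2:ℝ) ≤ (n:ℝ) := by exact_mod_cast hn
  set k : ℝ := ((n:ℝ)-1)/2 with hk
  have hk0 : (0:ℝ) < k := by rw [hk]; linarith
  have hqk : k - 1 < q := by
    have : ((n:ℝ)-3)/2 = k - 1 := by rw [hk]; ring
    linarith [hq, this.symm.le]
  have hq1 : (-1:ℝ) < q - k := by linarith
  have hq2 : (-1:ℝ) < q := by linarith
  obtain ⟨CE1, hCE1, hE1⟩ := Ebound lam0 hlam0 (q-k) hq1
  obtain ⟨CE2, hCE2, hE2⟩ := Ebound lam0 hlam0 q hq2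
  set c1 : ℝ := min (1/2 : ℝ) (R/6) / 2 with hc1
  have hc1pos : 0 < c1 := by
    rw [hc1]
    have : (0:ℝ) < min (1/2 : ℝ) (R/6) := lt_min (by norm_num) (by linarith)
    linarith
  set c2 : ℝ := 3/2 + R/6 with hc2
  have hc2pos : 0 < c2 := by rw [hc2]; linarith
  set T1 : ℝ := Cψ * c1 ^ (-k) * CE1 * (1+R/3) ^ (q+1-k) with hT1
  set T2 : ℝ := Cψ * CE2 * c1 ^ (-(q+1)) * c2 ^ (q+1-k) with hT2
  have hT1pos : 0 < T1 := by
    rw [hT1]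
    have h1 : (0:ℝ) < c1 ^ (-k) := Real.rpow_pos_of_pos hc1pos _
    have h2 : (0:ℝ) < (1+R/3) ^ (q+1-k) := Real.rpow_pos_of_pos (by linarith) _
    positivity
  have hT2pos : 0 < T2 := by
    rw [hT2]
    have h1 : (0:ℝ) < c1 ^ (-(q+1)) := Real.rpow_pos_of_pos hc1pos _
    have h2 : (0:ℝ) < c2 ^ (q+1-k) := Real.rpow_pos_of_pos hc2pos _
    positivity
  refine ⟨T1 + T2, by linarith, ?_⟩
  intro t ht x hx
  have hφpos : 0 < phi m t := by
    rw [phi]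
    have h1 : (0:ℝ) < 2/(m+2) := by apply div_pos <;> linarith
    have h2 : (0:ℝ) < t ^ ((m+2)/2) := Real.rpow_pos_of_pos ht _
    positivity
  set φ : ℝ := phi m t with hφ
  set r : ℝ := ‖x‖ with hr
  have hr0 : 0 ≤ r := norm_nonneg x
  set a : ℝ := φ + R - r with ha_def
  have ha : 0 ≤ a := by rw [ha_def]; linarith [hx]
  set Φ : ℝ := br φ with hΦdef
  have hΦval : Φ = 3 + φ := by rw [hΦdef, br, abs_of_pos hφpos]
  have hΦ3 : 3 ≤ Φ := by rw [hΦval]; linarith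
  have hΦpos : 0 < Φ := by linarith
  set b : ℝ := br (φ - r) with hbdef
  have hbval : b = 3 + |φ - r| := by rw [hbdef, br]
  have hb3 : 3 ≤ b := by rw [hbval]; linarith [abs_nonneg (φ - r)]
  have hbpos : 0 < b := by linarith
  have hexp2 : ((n:ℝ)-3)/2 - q = k - 1 - q := by rw [hk]; ring
  rw [hexp2]
  have hkm : k - 1 - q ≤ 0 := by linarith
  have hΦk : (0:ℝ) < Φ ^ (-k) := Real.rpow_pos_of_pos hΦpos _
  have hbk : (0:ℝ) < b ^ (k-1-q) := Real.rpow_pos_of_pos hbpos _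
  have hφR : 2 * c1 * Φ ≤ φ + R := by
    rcases le_or_gt 3 φ with h | h
    · have h1 : 2 * c1 ≤ 1/2 := by
        rw [hc1]
        have := min_le_left (1/2:ℝ) (R/6)
        linarith
      have h2 : Φ ≤ 2 * φ := by rw [hΦval]; linarith
      have h3 : 2 * c1 * Φ ≤ (1/2) * Φ := mul_le_mul_of_nonneg_right h1 hΦpos.le
      linarith
    · have h1 : 2 * c1 ≤ R/6 := by
        rw [hc1]
        have := min_le_right (1/2:ℝ) (R/6)
        linarith
      have h2 : Φ ≤ 6 := by rw [hΦval]; linarith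
      have h3 : 2 * c1 * Φ ≤ (R/6) * Φ := mul_le_mul_of_nonneg_right h1 hΦpos.le
      have h4 : (R/6) * Φ ≤ (R/6) * 6 := mul_le_mul_of_nonneg_left h2 (by linarith)
      linarith
  set f : ℝ → ℝ := fun lam => Real.exp (-(lam * (φ + R))) * Psi n (lam • x) * lam ^ q with hf
  have hetaqd : etaqd n m R lam0 q x t = ∫ lam in (0:ℝ)..lam0, f lam := rfl
  by_cases hfi : IntervalIntegrable f volume 0 lam0
  case neg =>
    rw [hetaqd, intervalIntegral.integral_undef hfi]
    have : (0:ℝ) < (T1 + T2) * Φ ^ (-k) * b ^ (k-1-q) :=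
      mul_pos (mul_pos (by linarith) hΦk) hbk
    linarith
  case pos =>
  have hnull : ∀ᵐ (l:ℝ) ∂(volume : Measure ℝ), l ≠ 0 := by
    have hset : {l : ℝ | ¬ l ≠ 0} = {(0:ℝ)} := by ext l; simp
    rw [ae_iff, hset]
    exact measure_singleton 0
  rcases le_or_gt ((φ+R)/2) r with hcase | hcase
  · -- Case A : r large
    have hrpos : 0 < r := lt_of_lt_of_le (by linarith) hcase
    have hx0 : x ≠ 0 := by
      rw [hr] at hrpos
      exact norm_pos_iff.1 hrpos
    have hrc1 : c1 * Φ ≤ r := by linarith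
    set g : ℝ → ℝ := fun l => (Cψ * r ^ (-k)) * (l ^ (q-k) * Real.exp (-(l*a))) with hg
    have hgi : IntervalIntegrable g volume 0 lam0 :=
      (intgE lam0 hlam0 (q-k) hq1 a ha).const_mul _
    have hkey : ∀ l ∈ Ioc (0:ℝ) lam0, f l ≤ g l := by
      intro l hl
      have hl0 : 0 < l := hl.1
      have hlx : (l • x) ≠ 0 := smul_ne_zero (ne_of_gt hl0) hx0
      have hnrm : ‖l • x‖ = l * r := by
        rw [norm_smul, Real.norm_eq_abs, abs_of_pos hl0, hr]
      have hψ := hψdec (l • x) hlx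
      rw [hnrm] at hψ
      have hlq : (0:ℝ) ≤ l ^ q := Real.rpow_nonneg hl0.le _
      have step : f l ≤ Real.exp (-(l*(φ+R))) * (Cψ * Real.exp (l*r) * (l*r) ^ (-k)) * l ^ q := by
        rw [hf]
        apply mul_le_mul_of_nonneg_right _ hlq
        exact mul_le_mul_of_nonneg_left hψ (Real.exp_pos _).le
      refine le_trans step (le_of_eq ?_)
      rw [hg]
      have e1 : Real.exp (-(l*(φ+R))) * Real.exp (l*r) = Real.exp (-(l*a)) := by
        rw [← Real.exp_add]
        congr 1
        rw [ha_def]; ring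
      have e2 : l ^ q * l ^ (-k) = l ^ (q-k) := by
        rw [← Real.rpow_add hl0, sub_eq_add_neg]
      rw [Real.mul_rpow hl0.le hr0]
      calc Real.exp (-(l*(φ+R))) * (Cψ * Real.exp (l*r) * (l ^ (-k) * r ^ (-k))) * l ^ q
          = (Cψ * r ^ (-k)) * ((l ^ q * l ^ (-k)) * (Real.exp (-(l*(φ+R))) * Real.exp (l*r))) := by
            ring
        _ = (Cψ * r ^ (-k)) * (l ^ (q-k) * Real.exp (-(l*a))) := by rw [e1, e2]
    have hmono : etaqd n m R lam0 q x t ≤ ∫ l in (0:ℝ)..lam0, g l := by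
      rw [hetaqd]
      apply intervalIntegral.integral_mono_ae_restrict hlam0.le hfi hgi
      apply (ae_restrict_iff' measurableSet_Icc).2
      filter_upwards [hnull] with l hl0 hlmem
      exact hkey l ⟨lt_of_le_of_ne hlmem.1 (Ne.symm hl0), hlmem.2⟩
    have hgval : (∫ l in (0:ℝ)..lam0, g l)
        = (Cψ * r ^ (-k)) * ∫ l in (0:ℝ)..lam0, l ^ (q-k) * Real.exp (-(l*a)) := by
      rw [hg]
      exact intervalIntegral.integral_const_mul _ _
    have hrk : r ^ (-k) ≤ c1 ^ (-k) * Φ ^ (-k) := by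
      have h1 : r ^ (-k) ≤ (c1 * Φ) ^ (-k) :=
        Real.rpow_le_rpow_of_nonpos (by positivity) hrc1 (by linarith)
      rwa [Real.mul_rpow hc1pos.le hΦpos.le] at h1
    have h3a : (3 + a) ^ (-(q-k+1)) ≤ (1+R/3) ^ (q+1-k) * b ^ (k-1-q) := by
      have hble : b ≤ (1+R/3) * (3 + a) := by
        have hfr : φ - r = a - R := by rw [ha_def]; ring
        have h1 : |φ - r| ≤ a + R := by
          rw [hfr]
          have h2 : |a - R| ≤ |a| + |R| := by
            calc |a - R| = |a + -R| := by rw [sub_eq_add_neg]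
              _ ≤ |a| + |-R| := abs_add_le a (-R)
              _ = |a| + |R| := by rw [abs_neg]
          rw [abs_of_nonneg ha, abs_of_pos hR] at h2
          exact h2
        have haR : (0:ℝ) ≤ a * R / 3 :=
          div_nonneg (mul_nonneg ha hR.le) (by norm_num)
        have hexpand : (1+R/3) * (3+a) = 3 + a + R + a*R/3 := by ring
        rw [hbval, hexpand]
        calc 3 + |φ - r| ≤ 3 + (a + R) := add_le_add_right h1 3
          _ = 3 + a + R := (add_assoc 3 a R).symm
          _ ≤ 3 + a + R + a*R/3 := le_add_of_nonneg_right haR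
      have ht1 := rpow_transfer (by linarith : (0:ℝ) < 1+R/3) hbpos (by linarith : (0:ℝ) < 3+a)
        hble hkm
      rw [show -(k-1-q) = q+1-k from by ring] at ht1
      rw [show -(q-k+1) = k-1-q from by ring]
      exact ht1
    have hrknn : (0:ℝ) ≤ r ^ (-k) := Real.rpow_nonneg hr0 _
    have hX1 : (0:ℝ) ≤ (3+a) ^ (-(q-k+1)) := Real.rpow_nonneg (by linarith) _
    calc etaqd n m R lam0 q x t
        ≤ (Cψ * r ^ (-k)) * ∫ l in (0:ℝ)..lam0, l ^ (q-k) * Real.exp (-(l*a)) := by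
          rw [← hgval]; exact hmono
      _ ≤ (Cψ * r ^ (-k)) * (CE1 * (3+a) ^ (-(q-k+1))) := by
          apply mul_le_mul_of_nonneg_left (hE1 a ha) (by positivity)
      _ ≤ (Cψ * (c1 ^ (-k) * Φ ^ (-k))) * (CE1 * (3+a) ^ (-(q-k+1))) := by
          apply mul_le_mul_of_nonneg_right _ (by positivity)
          exact mul_le_mul_of_nonneg_left hrk hCψ.le
      _ ≤ (Cψ * (c1 ^ (-k) * Φ ^ (-k))) * (CE1 * ((1+R/3) ^ (q+1-k) * b ^ (k-1-q))) := by
          apply mul_le_mul_of_nonneg_left _ ?_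
          · exact mul_le_mul_of_nonneg_left h3a hCE1.le
          · have : (0:ℝ) < c1 ^ (-k) := Real.rpow_pos_of_pos hc1pos _
            positivity
      _ = T1 * Φ ^ (-k) * b ^ (k-1-q) := by rw [hT1]; ring
      _ ≤ (T1 + T2) * Φ ^ (-k) * b ^ (k-1-q) := by
          apply mul_le_mul_of_nonneg_right _ hbk.le
          apply mul_le_mul_of_nonneg_right _ hΦk.le
          linarith
  · -- Case B : r small
    have haΦ : c1 * Φ ≤ 3 + a := by
      rw [ha_def]; linarith
    set g : ℝ → ℝ := fun l => Cψ * (l ^ q * Real.exp (-(l*a))) with hg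
    have hgi : IntervalIntegrable g volume 0 lam0 :=
      (intgE lam0 hlam0 q hq2 a ha).const_mul _
    have hkey : ∀ l ∈ Ioc (0:ℝ) lam0, f l ≤ g l := by
      intro l hl
      have hl0 : 0 < l := hl.1
      have hnrm : ‖l • x‖ = l * r := by
        rw [norm_smul, Real.norm_eq_abs, abs_of_pos hl0, hr]
      have hψ := hψtriv (l • x)
      rw [hnrm] at hψ
      have hlq : (0:ℝ) ≤ l ^ q := Real.rpow_nonneg hl0.le _
      have step : f l ≤ Real.exp (-(l*(φ+R))) * (Cψ * Real.exp (l*r)) * l ^ q := by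
        rw [hf]
        apply mul_le_mul_of_nonneg_right _ hlq
        exact mul_le_mul_of_nonneg_left hψ (Real.exp_pos _).le
      refine le_trans step (le_of_eq ?_)
      rw [hg]
      have e1 : Real.exp (-(l*(φ+R))) * Real.exp (l*r) = Real.exp (-(l*a)) := by
        rw [← Real.exp_add]
        congr 1
        rw [ha_def]; ring
      calc Real.exp (-(l*(φ+R))) * (Cψ * Real.exp (l*r)) * l ^ q
          = Cψ * (l ^ q * (Real.exp (-(l*(φ+R))) * Real.exp (l*r))) := by ring
        _ = Cψ * (l ^ q * Real.exp (-(l*a))) := by rw [e1]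
    have hmono : etaqd n m R lam0 q x t ≤ ∫ l in (0:ℝ)..lam0, g l := by
      rw [hetaqd]
      apply intervalIntegral.integral_mono_ae_restrict hlam0.le hfi hgi
      apply (ae_restrict_iff' measurableSet_Icc).2
      filter_upwards [hnull] with l hl0 hlmem
      exact hkey l ⟨lt_of_le_of_ne hlmem.1 (Ne.symm hl0), hlmem.2⟩
    have hgval : (∫ l in (0:ℝ)..lam0, g l)
        = Cψ * ∫ l in (0:ℝ)..lam0, l ^ q * Real.exp (-(l*a)) := by
      rw [hg]
      exact intervalIntegral.integral_const_mul _ _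
    have hB2 : (3+a) ^ (-(q+1)) ≤ c1 ^ (-(q+1)) * Φ ^ (-(q+1)) := by
      have h1 : (3+a) ^ (-(q+1)) ≤ (c1 * Φ) ^ (-(q+1)) :=
        Real.rpow_le_rpow_of_nonpos (by positivity) haΦ (by linarith)
      rwa [Real.mul_rpow hc1pos.le hΦpos.le] at h1
    have hB3 : Φ ^ (-(q+1)) = Φ ^ (-k) * Φ ^ (k-1-q) := by
      rw [← Real.rpow_add hΦpos]
      congr 1
      ring
    have hB4 : Φ ^ (k-1-q) ≤ c2 ^ (q+1-k) * b ^ (k-1-q) := by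
      have hbc2 : b ≤ c2 * Φ := by
        have h1 : |φ - r| ≤ φ + r := by
          calc |φ - r| = |φ + -r| := by rw [sub_eq_add_neg]
            _ ≤ |φ| + |-r| := abs_add_le φ (-r)
            _ = φ + r := by rw [abs_neg, abs_of_pos hφpos, abs_of_nonneg hr0]
        have hRφ : (0:ℝ) ≤ 3/2 + R*φ/6 := by
          have h9 : (0:ℝ) ≤ R*φ/6 := div_nonneg (mul_nonneg hR.le hφpos.le) (by norm_num)
          linarith
        have hexpand : (3/2 + R/6) * (3 + φ) = (3 + (φ + (φ+R)/2)) + (3/2 + R*φ/6) := by ring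
        rw [hbval, hc2, hΦval, hexpand]
        calc 3 + |φ - r| ≤ 3 + (φ + r) := add_le_add_right h1 3
          _ ≤ 3 + (φ + (φ+R)/2) := add_le_add_right (add_le_add_right hcase.le φ) 3
          _ ≤ (3 + (φ + (φ+R)/2)) + (3/2 + R*φ/6) := le_add_of_nonneg_right hRφ
      have ht1 := rpow_transfer hc2pos hbpos hΦpos hbc2 hkm
      rw [show -(k-1-q) = q+1-k from by ring] at ht1
      exact ht1
    calc etaqd n m R lam0 q x t
        ≤ Cψ * ∫ l in (0:ℝ)..lam0, l ^ q * Real.exp (-(l*a)) := by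
          rw [← hgval]; exact hmono
      _ ≤ Cψ * (CE2 * (3+a) ^ (-(q+1))) := by
          apply mul_le_mul_of_nonneg_left (hE2 a ha) hCψ.le
      _ ≤ Cψ * (CE2 * (c1 ^ (-(q+1)) * Φ ^ (-(q+1)))) := by
          apply mul_le_mul_of_nonneg_left _ hCψ.le
          exact mul_le_mul_of_nonneg_left hB2 hCE2.le
      _ = (Cψ * CE2 * c1 ^ (-(q+1)) * Φ ^ (-k)) * Φ ^ (k-1-q) := by
          rw [hB3]; ring
      _ ≤ (Cψ * CE2 * c1 ^ (-(q+1)) * Φ ^ (-k)) * (c2 ^ (q+1-k) * b ^ (k-1-q)) := by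
          apply mul_le_mul_of_nonneg_left hB4
          have h1 : (0:ℝ) < c1 ^ (-(q+1)) := Real.rpow_pos_of_pos hc1pos _
          positivity
      _ = T2 * Φ ^ (-k) * b ^ (k-1-q) := by rw [hT2]; ring
      _ ≤ (T1 + T2) * Φ ^ (-k) * b ^ (k-1-q) := by
          apply mul_le_mul_of_nonneg_right _ hbk.le
          apply mul_le_mul_of_nonneg_right _ hΦk.le
          linarith

end
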